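/- The matrix L = (F₆⊗I₆)·P·(F₆ᴴ⊗I₆) is symmetric, L = Lᵀ, it is unitary, and every entry of 6·L is a sixth root of unity; hence 6·L is a Butson-type complex Hadamard matrix in BH(36,6). -/

import Mathlib

open Matrix Complex BigOperators

noncomputable section

/-- Reshuffling: `X^R_{(j,k),(l,m)} = X_{(j,l),(k,m)}`. -/
def reshuffle {d : ℕ} (X : Matrix (Fin d × Fin d) (Fin d × Fin d) ℂ) :
    Matrix (Fin d × Fin d) (Fin d × Fin d) ℂ :=
  fun p q => X (p.1, q.1) (p.2, q.2)

/-- Partial transpose: `X^Γ_{(j,k),(l,m)} = X_{(j,m),(l,k)}`. -/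
def ptranspose {d : ℕ} (X : Matrix (Fin d × Fin d) (Fin d × Fin d) ℂ) :
    Matrix (Fin d × Fin d) (Fin d × Fin d) ℂ :=
  fun p q => X (p.1, q.2) (q.1, p.2)

def IsUnitary {n : Type*} [Fintype n] [DecidableEq n] (M : Matrix n n ℂ) : Prop :=
  M ∈ Matrix.unitaryGroup n ℂ

/-- Kronecker product with index convention `(V⊗W)_{(j,k),(l,m)} = V_{jl} W_{km}`. -/
def kron {d : ℕ} (A B : Matrix (Fin d) (Fin d) ℂ) :
    Matrix (Fin d × Fin d) (Fin d × Fin d) ℂ :=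
  fun p q => A p.1 q.1 * B p.2 q.2

/-- The unitary Fourier matrix of order six, `(F₆)_{jk} = ω^{jk}/√6` with `ω = exp(2πi/6)`. -/
def F6 : Matrix (Fin 6) (Fin 6) ℂ :=
  fun j k => Complex.exp (2 * (Real.pi : ℂ) * Complex.I * (j.val : ℂ) * (k.val : ℂ) / 6) /
    (Real.sqrt 6 : ℂ)

/-- The cyclic shift on ℂ⁶: `X|j⟩ = |j+1 mod 6⟩`. -/
def Xshift : Matrix (Fin 6) (Fin 6) ℂ := fun j k => if j = k + 1 then 1 else 0

/-- The generalized CNOT permutation `P = Σ_j |j⟩⟨j| ⊗ X^j` of order 36. -/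
def Pcnot : Matrix (Fin 6 × Fin 6) (Fin 6 × Fin 6) ℂ :=
  fun p q => if p.1 = q.1 then (Xshift ^ (p.1 : ℕ)) p.2 q.2 else 0

def Kmat : Matrix (Fin 6 × Fin 6) (Fin 6 × Fin 6) ℂ := kron F6 1 * Pcnot * kron F6 1

def Lmat : Matrix (Fin 6 × Fin 6) (Fin 6 × Fin 6) ℂ := kron F6 1 * Pcnot * kron F6ᴴ 1

/-- Index of the pair `(j,k)` in the vector of length 36 (row-major order). -/
def idx (p : Fin 6 × Fin 6) : ℕ := 6 * p.1.val + p.2.val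

def Λ₁ (p : Fin 6 × Fin 6) : ℝ :=
  ([0,1,0,1,3,3,3,3,1,5,2,4,2,1,3,1,2,3,1,1,2,0,3,5,5,3,2,3,2,5,4,4,1,5,5,1] :
    List ℝ).getD (idx p) 0 / 6

def Λ₂ (p : Fin 6 × Fin 6) : ℝ :=
  ([0,2,3,3,2,0,0,3,2,2,0,4,2,0,3,5,0,0,0,5,0,0,2,0,2,2,5,3,2,4,2,3,0,2,0,0] :
    List ℝ).getD (idx p) 0 / 6

def Λ₃ (p : Fin 6 × Fin 6) : ℝ :=
  ([0,2,2,0,0,1,0,1,1,1,2,1,0,2,0,2,2,2,2,0,2,2,2,1,1,1,2,0,2,2,0,1,2,2,1,0] :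
    List ℝ).getD (idx p) 0 / 3

/-- `𝒰_j = K · diag(exp{2πiΛ}) · L`. -/
def Umat (Λ : Fin 6 × Fin 6 → ℝ) : Matrix (Fin 6 × Fin 6) (Fin 6 × Fin 6) ℂ :=
  Kmat * Matrix.diagonal (fun p => Complex.exp (2 * (Real.pi : ℂ) * Complex.I * (Λ p : ℂ))) * Lmat

open Fin.NatCast Fin.CommRing

def e (n : ℤ) : ℂ := Complex.exp (2 * (Real.pi : ℂ) * Complex.I * n / 6)

lemma e_zero : e 0 = 1 := by simp [e]

lemma e_add (m n : ℤ) : e (m + n) = e m * e n := by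
  rw [e, e, e, ← Complex.exp_add]; congr 1; push_cast; ring

lemma e_pow (n : ℤ) (v : ℕ) : e n ^ v = e (n * v) := by
  rw [e, e, ← Complex.exp_nat_mul]; congr 1; push_cast; ring

lemma e_six_dvd {n : ℤ} (h : (6:ℤ) ∣ n) : e n = 1 := by
  obtain ⟨k, rfl⟩ := h
  rw [e]
  have : 2 * (Real.pi : ℂ) * Complex.I * ((6 * k : ℤ) : ℂ) / 6 = k * (2 * Real.pi * Complex.I) := by
    push_cast; ring
  rw [this, Complex.exp_int_mul_two_pi_mul_I]

lemma e_congr {m n : ℤ} (h : (6:ℤ) ∣ (m - n)) : e m = e n := by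
  have : e m = e (m - n) * e n := by rw [← e_add]; ring_nf
  rw [this, e_six_dvd h, one_mul]

lemma e_ne_one {n : ℤ} (h : ¬ (6:ℤ) ∣ n) : e n ≠ 1 := by
  intro he
  rw [e, Complex.exp_eq_one_iff] at he
  obtain ⟨k, hk⟩ := he
  apply h
  refine ⟨k, ?_⟩
  have hπ : (Real.pi : ℂ) ≠ 0 := by exact_mod_cast Real.pi_ne_zero
  have hI := Complex.I_ne_zero
  have : (n : ℂ) = 6 * k := by
    field_simp at hk
    have h2 : (2:ℂ) * Real.pi * Complex.I * n = 2 * Real.pi * Complex.I * (6 * k) := by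
      rw [hk]
    have := mul_left_cancel₀ (by simp [hπ, hI] : (2:ℂ) * Real.pi * Complex.I ≠ 0) h2
    exact this
  exact_mod_cast this

lemma star_e (n : ℤ) : star (e n) = e (-n) := by
  rw [e, e]
  rw [show (star (cexp (2 * (Real.pi:ℂ) * Complex.I * (n:ℂ) / 6)) : ℂ)
      = (starRingEnd ℂ) (cexp (2 * (Real.pi:ℂ) * Complex.I * (n:ℂ) / 6)) from rfl,
    ← Complex.exp_conj]
  congr 1
  simp [map_div₀, Complex.conj_I, map_ofNat]

lemma abs_e (n : ℤ) : ‖e n‖ = 1 := by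
  rw [e, Complex.norm_exp]
  norm_num [Complex.div_re, Complex.mul_re, Complex.mul_im]

lemma sum_e (n : ℤ) : ∑ a : Fin 6, e (n * a.val) = if (6:ℤ) ∣ n then 6 else 0 := by
  by_cases h : (6:ℤ) ∣ n
  · simp only [h, if_true]
    have : ∀ a : Fin 6, e (n * a.val) = 1 := fun a => e_six_dvd (Dvd.dvd.mul_right h _)
    simp [this]
  · simp only [h, if_false]
    have hne : e n ≠ 1 := e_ne_one h
    have : ∑ a : Fin 6, e (n * a.val) = ∑ i ∈ Finset.range 6, (e n) ^ i := by
      rw [Fin.sum_univ_eq_sum_range (fun i => e (n * i))]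
      exact Finset.sum_congr rfl fun i _ => by rw [e_pow]
    rw [this, geom_sum_eq hne]
    have h6 : e n ^ 6 = 1 := by rw [e_pow]; exact e_six_dvd ⟨n, by ring⟩
    rw [h6]; simp

lemma F6_apply (j k : Fin 6) : F6 j k = e ((j.val : ℤ) * k.val) / (Real.sqrt 6 : ℂ) := by
  rw [F6, e]; congr 2; push_cast; ring

lemma Xpow_apply (a : ℕ) : ∀ u v : Fin 6,
    (Xshift ^ a) u v = if u = v + (a : Fin 6) then 1 else 0 := by
  induction a with
  | zero => intro u v; simp [Matrix.one_apply]
  | succ n ih =>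
    intro u v
    rw [pow_succ, Matrix.mul_apply]
    simp only [Xshift, mul_ite, mul_one, mul_zero, Finset.sum_ite_eq', Finset.mem_univ, if_true]
    rw [ih]
    congr 1
    simp only [eq_iff_iff]
    constructor <;> intro h <;> rw [h] <;> push_cast <;> ring

lemma Lmat_apply (j k l m : Fin 6) :
    Lmat (j, k) (l, m) = e (((j:ℤ) - l) * ((k:ℤ) - m)) / 6 := by
  rw [Lmat]
  simp only [Matrix.mul_apply, Fintype.sum_prod_type, kron, Pcnot, Xpow_apply,
    Matrix.one_apply, Matrix.conjTranspose_apply]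
  simp only [mul_ite, ite_mul, mul_one, one_mul, mul_zero, zero_mul,
    Finset.sum_ite_eq, Finset.sum_ite_eq', Finset.mem_univ, if_true,
    Finset.sum_ite_irrel, Finset.sum_const_zero]
  have hc : ∀ x : Fin 6, (k = m + ((x.val : ℕ) : Fin 6)) ↔ (x = k - m) := fun x => by
    rw [Fin.cast_val_eq_self]
    constructor
    · intro h; rw [h]; ring
    · intro h; rw [h]; ring
  simp only [hc]
  rw [Finset.sum_ite_eq' Finset.univ (k - m) (fun x => F6 j x * star (F6 l x))]
  simp only [Finset.mem_univ, if_true]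
  rw [F6_apply, F6_apply, star_div₀, star_e]
  rw [show (star ((Real.sqrt 6 : ℝ) : ℂ)) = ((Real.sqrt 6 : ℝ) : ℂ) from Complex.conj_ofReal _]
  rw [div_mul_div_comm, ← e_add]
  have h6 : ((Real.sqrt 6 : ℝ) : ℂ) * ((Real.sqrt 6 : ℝ) : ℂ) = 6 := by
    rw [← Complex.ofReal_mul, Real.mul_self_sqrt (by norm_num)]
    norm_num
  rw [h6]
  congr 1
  apply e_congr
  have hd : ∀ k m : Fin 6, (6:ℤ) ∣ (((k - m : Fin 6).val : ℤ) - ((k.val : ℤ) - (m.val : ℤ))) := by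
    decide
  obtain ⟨t, ht⟩ := hd k m
  refine ⟨((j.val : ℤ) - l.val) * t, ?_⟩
  have : (((k - m : Fin 6).val : ℤ)) = ((k.val : ℤ) - m.val) + 6 * t := by linarith
  rw [this]
  ring

lemma fin6_dvd_iff : ∀ k m : Fin 6, ((6:ℤ) ∣ ((k.val:ℤ) - m.val)) ↔ k = m := by decide

lemma star_six : star (6:ℂ) = 6 := by
  rw [Complex.star_def, ← Complex.ofReal_ofNat, Complex.conj_ofReal]

lemma LLH : Lmat * Lmatᴴ = 1 := by
  ext ⟨j, k⟩ ⟨l, m⟩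
  rw [Matrix.mul_apply, Matrix.one_apply]
  simp only [Matrix.conjTranspose_apply]
  set C : ℤ := (j:ℤ) * k - (l:ℤ) * m with hC
  set na : ℤ := -((k:ℤ) - m) with hna
  set nb : ℤ := -((j:ℤ) - l) with hnb
  have point : ∀ a b : Fin 6, Lmat (j,k) (a,b) * star (Lmat (l,m) (a,b))
      = (e C / 36 * e (na * a.val)) * e (nb * b.val) := by
    intro a b
    rw [Lmat_apply, Lmat_apply, star_div₀, star_e, star_six, div_mul_div_comm, ← e_add]
    have h36 : ((6:ℂ) * 6) = 36 := by norm_num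
    rw [h36]
    have : (e C / 36 * e (na * a.val)) * e (nb * b.val)
        = e (C + na * a.val + nb * b.val) / 36 := by
      rw [e_add, e_add]; ring
    rw [this]
    congr 1
    rw [hC, hna, hnb]; ring
  rw [Fintype.sum_prod_type]
  simp only [point]
  simp only [← Finset.mul_sum]
  rw [← Finset.sum_mul]
  simp only [← Finset.mul_sum]
  rw [sum_e, sum_e]
  have hka : ((6:ℤ) ∣ na) ↔ k = m := by rw [hna, dvd_neg]; exact fin6_dvd_iff k m
  have hjb : ((6:ℤ) ∣ nb) ↔ j = l := by rw [hnb, dvd_neg]; exact fin6_dvd_iff j l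
  by_cases h1 : j = l
  · by_cases h2 : k = m
    · subst h1; subst h2
      simp only [hka.mpr rfl, hjb.mpr rfl, if_true, Prod.mk.injEq, and_self]
      have : C = 0 := by rw [hC]; ring
      rw [this, e_zero]
      norm_num
    · rw [if_neg (fun h => h2 ((Prod.mk.injEq _ _ _ _).mp h).2)]
      rw [if_neg (fun h => h2 (hka.mp h))]
      ring
  · rw [if_neg (fun h => h1 ((Prod.mk.injEq _ _ _ _).mp h).1)]
    rw [if_neg (fun h => h1 (hjb.mp h))]
    ring

/-- `L = (F₆⊗I₆)·P·(F₆ᴴ⊗I₆)` is symmetric and unitary, and `6·L` is a Butson-type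
complex Hadamard matrix in BH(36,6): all entries of `6·L` are sixth roots of unity
(hence of modulus one) and `(6L)(6L)ᴴ = 36·I`. -/
theorem Lmat_symmetric_unitary_butson :
    Lmat = Lmatᵀ ∧
    IsUnitary Lmat ∧
    (∀ p q, ((6 : ℂ) * Lmat p q) ^ 6 = 1) ∧
    (∀ p q, ‖(6 : ℂ) * Lmat p q‖ = 1) ∧
    ((6 : ℂ) • Lmat) * ((6 : ℂ) • Lmat)ᴴ =
      (36 : ℂ) • (1 : Matrix (Fin 6 × Fin 6) (Fin 6 × Fin 6) ℂ) := by
  have hent : ∀ p q : Fin 6 × Fin 6, (6 : ℂ) * Lmat p q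
      = e (((p.1:ℤ) - q.1) * ((p.2:ℤ) - q.2)) := by
    intro p q
    rw [show Lmat p q = Lmat (p.1, p.2) (q.1, q.2) from rfl, Lmat_apply]
    field_simp
  refine ⟨?_, ?_, ?_, ?_, ?_⟩
  · ext ⟨j, k⟩ ⟨l, m⟩
    rw [Matrix.transpose_apply, Lmat_apply, Lmat_apply]
    congr 2
    ring
  · rw [IsUnitary, Matrix.mem_unitaryGroup_iff]
    exact LLH
  · intro p q
    rw [hent, e_pow]
    exact e_six_dvd ⟨((p.1:ℤ) - q.1) * ((p.2:ℤ) - q.2), by ring⟩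
  · intro p q
    rw [hent]
    exact abs_e _
  · rw [Matrix.conjTranspose_smul, star_six, smul_mul_assoc, mul_smul_comm, smul_smul, LLH]
    norm_num
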